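/- arXiv:2405.15150 — 2 statements merged into one kernel-verified Lean document; each statement's English description precedes it below -/
import Mathlib

section
/- The vector approximation mechanism is ε-local label differentially private: for every pair of labels y, y' ∈ {1,…,K} and every binary vector z ∈ {0,1}^K, the conditional probability masses satisfy P(Z = z | Y = y) ≤ e^ε · P(Z = z | Y = y'). -/
/-- Per-coordinate conditional mass of the vector approximation mechanism:
`vecMechQ ε K y l b = P(Z(l) = b | Y = y)`, where `a = exp (ε/2)`. -/
noncomputable def vecMechQ (ε : ℝ) (K : ℕ) (y l : Fin K) (b : Bool) : ℝ :=
  let a := Real.exp (ε / 2)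
  if b then (if l = y then a / (1 + a) else 1 / (1 + a))
  else (if l = y then 1 / (1 + a) else a / (1 + a))

lemma vecMechQ_pos (ε : ℝ) (K : ℕ) (y l : Fin K) (b : Bool) :
    0 < vecMechQ ε K y l b := by
  have ha : 0 < Real.exp (ε / 2) := Real.exp_pos _
  have h1 : 0 < 1 + Real.exp (ε / 2) := by linarith
  unfold vecMechQ
  simp only
  split_ifs <;> positivity

/-- the vector approximation mechanism is `ε`-local label DP. -/
theorem vecMech_local_label_DP (ε : ℝ) (hε : 0 < ε) (K : ℕ) (hK : 1 ≤ K)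
    (y y' : Fin K) (z : Fin K → Bool) :
    ∏ l, vecMechQ ε K y l (z l) ≤ Real.exp ε * ∏ l, vecMechQ ε K y' l (z l) := by
  set a := Real.exp (ε / 2) with ha_def
  have ha : 0 < a := Real.exp_pos _
  have ha1 : 1 ≤ a := by
    rw [ha_def]
    have : (0:ℝ) ≤ ε / 2 := by linarith
    calc (1:ℝ) = Real.exp 0 := (Real.exp_zero).symm
      _ ≤ Real.exp (ε / 2) := Real.exp_le_exp.mpr this
  have h1a : 0 < 1 + a := by linarith
  set c : Fin K → ℝ := fun l => if l ∈ ({y, y'} : Finset (Fin K)) then a else 1 with hc_def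
  have hpt : ∀ l : Fin K, vecMechQ ε K y l (z l) ≤ c l * vecMechQ ε K y' l (z l) := by
    intro l
    have hsq : 1 ≤ a * a := by nlinarith
    simp only [hc_def, Finset.mem_insert, Finset.mem_singleton]
    unfold vecMechQ
    simp only [← ha_def]
    split_ifs <;>
      first
        | tauto
        | (simp only [one_mul, ← mul_div_assoc, mul_one];
           rw [div_le_div_iff₀ h1a h1a]; try nlinarith)
  have hprodc : ∏ l, c l ≤ Real.exp ε := by
    have : ∏ l, c l = a ^ ({y, y'} : Finset (Fin K)).card := by
      rw [hc_def, Finset.prod_ite_mem, Finset.univ_inter, Finset.prod_const]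
    rw [this]
    have hcard : ({y, y'} : Finset (Fin K)).card ≤ 2 := by
      apply le_trans (Finset.card_insert_le _ _)
      simp
    calc a ^ ({y, y'} : Finset (Fin K)).card ≤ a ^ 2 := pow_le_pow_right₀ ha1 hcard
      _ = Real.exp ε := by
          rw [ha_def, ← Real.exp_nat_mul]
          congr 1
          push_cast
          ring
  calc ∏ l, vecMechQ ε K y l (z l)
      ≤ ∏ l, (c l * vecMechQ ε K y' l (z l)) := by
        apply Finset.prod_le_prod
        · intro l _; exact (vecMechQ_pos ε K y l (z l)).le
        · intro l _; exact hpt l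
    _ = (∏ l, c l) * ∏ l, vecMechQ ε K y' l (z l) := Finset.prod_mul_distrib
    _ ≤ Real.exp ε * ∏ l, vecMechQ ε K y' l (z l) := by
        apply mul_le_mul_of_nonneg_right hprodc
        exact Finset.prod_nonneg fun l _ => (vecMechQ_pos ε K y' l (z l)).le
end

section
/- Let c(ω,x) be a randomized classifier that, for every ω and x, selects an index maximizing g_j(ω,x) over j ∈ [K], where each g_j(ω,·) approximates η̃_j(·) = 1/(1+a) + ((a−1)/(a+1)) · η_j(·) with pointwise error Δ(ω,x) = max_{j∈[K]} |g_j(ω,x) − η̃_j(x)|. Then the excess risk satisfies R − R* ≤ ∫ E_ω[ 2Δ_ε(ω,x) · 1(η*(x) − η_s(x) ≤ 2Δ_ε(ω,x)) ] f(x) dx, where Δ_ε(ω,x) = ((a+1)/(a−1)) · Δ(ω,x), η*(x) = max_j η_j(x), and η_s(x) = max_{j ≠ c*(x)} η_j(x) is the second largest conditional class probability. -/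
open MeasureTheory

/-!
Since `η̃_j = 1/(1+a) + β η_j` with `β = (a-1)/(a+1) > 0`, a maximizer `k` of `g` satisfies
`β (η_i - η_k) ≤ (g_i + Δ) - (g_k - Δ) ≤ 2Δ` for every `i`, so the conditional excess risk
`η* - η_k` is at most `2Δ_ε`. It vanishes when `k = c*`, and otherwise `η_k ≤ η_s`, so it is
also bounded by `2Δ_ε · 1(η* - η_s ≤ 2Δ_ε)`. Integrating this pointwise bound against `P ⊗ f`
and applying Fubini gives the theorem.
-/

section Margin

variable {ι : Type*}

lemma sub_le_of_maximizes_affine_approx {η g : ι → ℝ} {α β Δ : ℝ} (hβ : 0 < β)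
    (happrox : ∀ j, |g j - (α + β * η j)| ≤ Δ) {k : ι} (hk : ∀ j, g j ≤ g k) (i : ι) :
    η i - η k ≤ 2 * (β⁻¹ * Δ) := by
  have hi_approx := abs_le.1 (happrox i)
  have hk_approx := abs_le.1 (happrox k)
  have hgap : β * (η i - η k) ≤ 2 * Δ := by linarith [hk i]
  rw [mul_left_comm, le_inv_mul_iff₀ hβ]
  exact hgap

lemma sub_le_mul_ite_of_margin {η : ι → ℝ} {i k : ι} {s D : ℝ} (hD : 0 ≤ D)
    (hk : η i - η k ≤ D) (hs : ∀ j, j ≠ i → η j ≤ s) :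
    η i - η k ≤ D * if η i - s ≤ D then 1 else 0 := by
  by_cases hki : k = i
  · subst hki
    split_ifs <;> simp [hD]
  · rw [if_pos (by linarith [hs k hki]), mul_one]
    exact hk

end Margin

lemma integral_integral_sub_integral_eq_integral_prod {Ω X : Type*} [MeasurableSpace Ω]
    [MeasurableSpace X] {P : Measure Ω} [IsProbabilityMeasure P] {μ : Measure X} [SFinite μ]
    {u : Ω × X → ℝ} {v : X → ℝ} (hu : Integrable u (P.prod μ)) (hv : Integrable v μ) :
    ∫ ω, ∫ x, u (ω, x) ∂μ ∂P - ∫ x, v x ∂μ = ∫ p, (u p - v p.2) ∂P.prod μ := by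
  rw [integral_sub hu (hv.comp_snd P), integral_prod u hu, integral_prod _ (hv.comp_snd P)]
  simp

lemma measurable_apply_of_measurable_index {ι X : Type*} [Countable ι] [MeasurableSpace ι]
    [MeasurableSingletonClass ι] [MeasurableSpace X] {η : ι → X → ℝ} (hη : ∀ j, Measurable (η j))
    {k : X → ι} (hk : Measurable k) : Measurable fun x => η (k x) x :=
  (measurable_from_prod_countable_right (f := fun q : ι × X => η q.1 q.2) hη).comp
    (hk.prodMk measurable_id)

theorem excess_risk_bound_vector_approximation_general (K d : ℕ)
    (ε : ℝ) (hε : 0 < ε) (a : ℝ) (ha : a = Real.exp (ε / 2))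
    -- the density of the feature vector
    (f : (Fin d → ℝ) → ℝ) (hf0 : ∀ x, 0 ≤ f x)
    (hfint : Integrable f)
    -- conditional class probabilities
    (η : Fin K → (Fin d → ℝ) → ℝ) (hηmeas : ∀ j, Measurable (η j))
    (hη0 : ∀ j x, 0 ≤ η j x) (hη1 : ∀ j x, η j x ≤ 1)
    -- the Bayes classifier: the unique maximizer of `j ↦ η_j(x)` for every `x`
    (cstar : (Fin d → ℝ) → Fin K) (hcstar_meas : Measurable cstar)
    (ηstar : (Fin d → ℝ) → ℝ) (hηstar : ∀ x, ηstar x = η (cstar x) x)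
    -- the second largest conditional class probability
    (ηs : (Fin d → ℝ) → ℝ)
    (hηs_ub : ∀ x, ∀ j, j ≠ cstar x → η j x ≤ ηs x)
    -- the privatized regression functions
    (ηt : Fin K → (Fin d → ℝ) → ℝ)
    (hηt : ∀ j x, ηt j x = 1 / (1 + a) + ((a - 1) / (a + 1)) * η j x)
    -- the randomized model outputs and classifier
    (Ω : Type*) [MeasurableSpace Ω] (P : Measure Ω) [IsProbabilityMeasure P]
    (g : Fin K → Ω × (Fin d → ℝ) → ℝ)
    (c : Ω × (Fin d → ℝ) → Fin K)
    (hc_max : ∀ p : Ω × (Fin d → ℝ), ∀ j, g j p ≤ g (c p) p)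
    -- the pointwise approximation error `Δ(ω,x) = max_j |g_j(ω,x) − η̃_j(x)|`
    (Δ : Ω × (Fin d → ℝ) → ℝ)
    (hΔ_ub : ∀ p : Ω × (Fin d → ℝ), ∀ j, |g j p - ηt j p.2| ≤ Δ p)
    -- the risk of `c` and the Bayes risk
    (R Rstar : ℝ)
    (hR : R = ∫ ω, (∫ x, (1 - η (c (ω, x)) x) * f x) ∂P)
    (hRstar : Rstar = ∫ x, (1 - ηstar x) * f x)
    -- integrability assumptions making both sides well defined
    (hint1 : Integrable (fun p : Ω × (Fin d → ℝ) => η (c p) p.2 * f p.2) (P.prod volume))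
    (hint2 : Integrable (fun p : Ω × (Fin d → ℝ) =>
      (2 * (((a + 1) / (a - 1)) * Δ p) *
        (if ηstar p.2 - ηs p.2 ≤ 2 * (((a + 1) / (a - 1)) * Δ p) then 1 else 0)) * f p.2)
      (P.prod volume)) :
    R - Rstar ≤ ∫ x, (∫ ω, 2 * (((a + 1) / (a - 1)) * Δ (ω, x)) *
      (if ηstar x - ηs x ≤ 2 * (((a + 1) / (a - 1)) * Δ (ω, x)) then 1 else 0) ∂P)
        * f x := by
  have ha1 : 1 < a := ha ▸ Real.one_lt_exp_iff.2 (by positivity)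
  have hβ : 0 < (a - 1) / (a + 1) := div_pos (by linarith) (by linarith)
  have hηstar_meas : Measurable ηstar := by
    simpa only [← funext hηstar] using measurable_apply_of_measurable_index hηmeas hcstar_meas
  have hRstar_int : Integrable (fun x => (1 - ηstar x) * f x) := by
    refine hfint.bdd_mul (c := 1) (measurable_const.sub hηstar_meas).aestronglyMeasurable
      (.of_forall fun x => ?_)
    rw [Real.norm_eq_abs, abs_le, hηstar]
    constructor <;> linarith [hη0 (cstar x) x, hη1 (cstar x) x]
  have hR_int : Integrable (fun p : Ω × (Fin d → ℝ) => (1 - η (c p) p.2) * f p.2)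
      (P.prod volume) :=
    ((hfint.comp_snd P).sub hint1).congr (.of_forall fun p => by simp only [Pi.sub_apply]; ring)
  have hexcess : ∀ p : Ω × (Fin d → ℝ), ηstar p.2 - η (c p) p.2 ≤
      2 * (((a + 1) / (a - 1)) * Δ p) *
        (if ηstar p.2 - ηs p.2 ≤ 2 * (((a + 1) / (a - 1)) * Δ p) then 1 else 0) := by
    intro p
    have hsub := sub_le_of_maximizes_affine_approx (η := fun j => η j p.2) (α := 1 / (1 + a)) hβ
      (fun j => hηt j p.2 ▸ hΔ_ub p j) (hc_max p) (cstar p.2)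
    rw [inv_div] at hsub
    have hD : 0 ≤ 2 * (((a + 1) / (a - 1)) * Δ p) :=
      mul_nonneg zero_le_two (mul_nonneg (div_nonneg (by linarith) (by linarith))
        ((abs_nonneg _).trans (hΔ_ub p (c p))))
    simpa only [hηstar] using sub_le_mul_ite_of_margin hD hsub (hηs_ub p.2)
  rw [hR, hRstar, integral_integral_sub_integral_eq_integral_prod hR_int hRstar_int]
  calc _ ≤ _ := integral_mono (hR_int.sub (hRstar_int.comp_snd P)) hint2 fun p => by
        rw [Pi.sub_apply, ← sub_mul, sub_sub_sub_cancel_left]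
        exact mul_le_mul_of_nonneg_right (hexcess p) (hf0 p.2)
    _ = _ := by
      rw [integral_prod_symm _ hint2]
      simp_rw [integral_mul_const]

/-- excess risk bound for the vector approximation method (Theorem 2 of
the paper). If the randomized classifier `c(ω,x)` maximizes `g_j(ω,x)` over `j`, where
`g_j` approximates `η̃_j = 1/(1+a) + ((a−1)/(a+1)) η_j` with pointwise error
`Δ(ω,x) = max_j |g_j(ω,x) − η̃_j(x)|`, then
`R − R* ≤ ∫ E_ω[2Δ_ε(ω,x) 1(η*(x) − η_s(x) ≤ 2Δ_ε(ω,x))] f(x) dx` with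
`Δ_ε = ((a+1)/(a−1)) Δ`. -/
theorem excess_risk_bound_vector_approximation (K d : ℕ) (hK : 2 ≤ K) (hd : 1 ≤ d)
    (ε : ℝ) (hε : 0 < ε) (a : ℝ) (ha : a = Real.exp (ε / 2))
    -- the density of the feature vector
    (f : (Fin d → ℝ) → ℝ) (hf0 : ∀ x, 0 ≤ f x) (hfmeas : Measurable f)
    (hfint : Integrable f) (hf1 : ∫ x, f x = 1)
    -- conditional class probabilities
    (η : Fin K → (Fin d → ℝ) → ℝ) (hηmeas : ∀ j, Measurable (η j))
    (hη0 : ∀ j x, 0 ≤ η j x) (hη1 : ∀ j x, η j x ≤ 1)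
    (hηsum : ∀ x, ∑ j, η j x = 1)
    -- the Bayes classifier: the unique maximizer of `j ↦ η_j(x)` for every `x`
    (cstar : (Fin d → ℝ) → Fin K) (hcstar_meas : Measurable cstar)
    (hcstar : ∀ x, ∀ j, j ≠ cstar x → η j x < η (cstar x) x)
    (ηstar : (Fin d → ℝ) → ℝ) (hηstar : ∀ x, ηstar x = η (cstar x) x)
    -- the second largest conditional class probability
    (ηs : (Fin d → ℝ) → ℝ) (hηs_meas : Measurable ηs)
    (hηs_ub : ∀ x, ∀ j, j ≠ cstar x → η j x ≤ ηs x)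
    (hηs_mem : ∀ x, ∃ j, j ≠ cstar x ∧ η j x = ηs x)
    -- the privatized regression functions
    (ηt : Fin K → (Fin d → ℝ) → ℝ)
    (hηt : ∀ j x, ηt j x = 1 / (1 + a) + ((a - 1) / (a + 1)) * η j x)
    -- the randomized model outputs and classifier
    (Ω : Type*) [MeasurableSpace Ω] (P : Measure Ω) [IsProbabilityMeasure P]
    (g : Fin K → Ω × (Fin d → ℝ) → ℝ) (hgmeas : ∀ j, Measurable (g j))
    (c : Ω × (Fin d → ℝ) → Fin K) (hc_meas : Measurable c)
    (hc_max : ∀ p : Ω × (Fin d → ℝ), ∀ j, g j p ≤ g (c p) p)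
    -- the pointwise approximation error `Δ(ω,x) = max_j |g_j(ω,x) − η̃_j(x)|`
    (Δ : Ω × (Fin d → ℝ) → ℝ) (hΔmeas : Measurable Δ)
    (hΔ_ub : ∀ p : Ω × (Fin d → ℝ), ∀ j, |g j p - ηt j p.2| ≤ Δ p)
    (hΔ_mem : ∀ p : Ω × (Fin d → ℝ), ∃ j, |g j p - ηt j p.2| = Δ p)
    -- the risk of `c` and the Bayes risk
    (R Rstar : ℝ)
    (hR : R = ∫ ω, (∫ x, (1 - η (c (ω, x)) x) * f x) ∂P)
    (hRstar : Rstar = ∫ x, (1 - ηstar x) * f x)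
    -- integrability assumptions making both sides well defined
    (hint1 : Integrable (fun p : Ω × (Fin d → ℝ) => η (c p) p.2 * f p.2) (P.prod volume))
    (hint2 : Integrable (fun p : Ω × (Fin d → ℝ) =>
      (2 * (((a + 1) / (a - 1)) * Δ p) *
        (if ηstar p.2 - ηs p.2 ≤ 2 * (((a + 1) / (a - 1)) * Δ p) then 1 else 0)) * f p.2)
      (P.prod volume)) :
    R - Rstar ≤ ∫ x, (∫ ω, 2 * (((a + 1) / (a - 1)) * Δ (ω, x)) *
      (if ηstar x - ηs x ≤ 2 * (((a + 1) / (a - 1)) * Δ (ω, x)) then 1 else 0) ∂P)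
        * f x :=
  excess_risk_bound_vector_approximation_general K d ε hε a ha f hf0 hfint η hηmeas hη0 hη1 cstar
    hcstar_meas ηstar hηstar ηs hηs_ub ηt hηt Ω P g c hc_max Δ hΔ_ub R Rstar hR hRstar hint1 hint2
end
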